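/- Failure of the density propagation inequality near the origin: let c_1 = c_2 = 0 and ρ(x_1,x_2) = exp(−(x_1 + x_2)). There exists ε > 0 such that for all (x_1, x_2) ∈ (0,ε)×(0,ε), the divergence div(ρf)(x_1,x_2) = ∂(ρ f_1)/∂x_1 (x_1,x_2) + ∂(ρ f_2)/∂x_2 (x_1,x_2) is strictly negative. -/

import Mathlib

/-! For `0 < x ≤ 1/4`, `g x` is a sum of terms `tanh u` and `1 + tanh u` with `u ≤ 1/2`, so
`tanh u ≤ 1/2` and each term is dominated by its derivative `2 (1 - tanh² u)`: `g x < g' x`.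
As `∂ᵢρ = -ρ`, `∂ᵢ(ρ fᵢ) = ρ (∂ᵢfᵢ - fᵢ) = ρ ((25 + c)(g - g') - 25 h - c²)`, which is negative
because `h ≥ 0`; so both summands of the divergence are negative. -/

noncomputable section

/-- The constant `a = (4π²n + 3π²)/2`. -/
def a (n : ℕ) : ℝ := (4 * Real.pi ^ 2 * n + 3 * Real.pi ^ 2) / 2

/-- The function `g` from the example. -/
def g (n : ℕ) (r : ℝ) : ℝ :=
  if |r| ≤ a n then
    Real.tanh (2 * r) +
      ∑ i ∈ Finset.Icc 1 n,
        Real.sign r * (1 + Real.sign r * Real.tanh (2 * (r - Real.sign r * (2 * Real.pi ^ 2 * i))))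
  else
    Real.sign r * ((2 * n + 1) + (r - Real.sign r * a n) ^ 2)

/-- The function `h` from the example. -/
def h (n : ℕ) (r : ℝ) : ℝ :=
  Real.sin (r / (2 * Real.pi)) ^ 2 +
    ∑ i ∈ Finset.Icc 1 n,
      (Real.tanh (r - 2 * Real.pi ^ 2 * i) + 1) * Real.sin (r / (2 * Real.pi)) ^ 2

/-- The vector field of subsystem `i`: its own state comes first, the other
subsystem's state second; `c` stands for `‖uᵢ‖_∞ / (a + 1)`. -/
def fvec (n : ℕ) (c : ℝ) (x y : ℝ) : ℝ :=
  -(25 + c) * g n x + 25 * h n y + c ^ 2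

/-- The density `ρ(x₁,x₂) = e^{-(x₁+x₂)}`. -/
def ρpos : ℝ × ℝ → ℝ := fun p => Real.exp (-(p.1 + p.2))

open Real

theorem HasDerivAt.tanh {f : ℝ → ℝ} {f' x : ℝ} (hf : HasDerivAt f f' x) :
    HasDerivAt (fun s => Real.tanh (f s)) ((1 - Real.tanh (f x) ^ 2) * f') x := by
  simp_rw [tanh_eq_sinh_div_cosh]
  refine (hf.sinh.fun_div hf.cosh (cosh_pos (f x)).ne').congr_deriv ?_
  field_simp

theorem Real.tanh_le_half {u : ℝ} (hu : u ≤ 1 / 2) : tanh u ≤ 1 / 2 := by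
  have hsum : 0 < exp u + exp (-u) := by positivity
  have hprod : exp u * exp (-u) = 1 := by rw [← exp_add, add_neg_cancel, exp_zero]
  have hsq : exp u * exp u ≤ 3 := by
    rw [← exp_add]
    linarith [exp_le_exp.2 (show u + u ≤ 1 by linarith), exp_one_lt_d9]
  rw [tanh_eq, div_le_iff₀ hsum]
  nlinarith [exp_pos u, exp_pos (-u)]

theorem Real.one_add_tanh_le_two_mul_one_sub_tanh_sq {u : ℝ} (hu : u ≤ 1 / 2) :
    1 + tanh u ≤ 2 * (1 - tanh u ^ 2) := by
  nlinarith [neg_one_lt_tanh u, tanh_le_half hu]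

theorem h_nonneg (n : ℕ) (y : ℝ) : 0 ≤ h n y :=
  add_nonneg (sq_nonneg _) <| Finset.sum_nonneg fun i _ =>
    mul_nonneg (by linarith [neg_one_lt_tanh (y - 2 * π ^ 2 * i)]) (sq_nonneg _)

def gInner (n : ℕ) (s : ℝ) : ℝ :=
  tanh (2 * s) + ∑ i ∈ Finset.Icc 1 n, (1 + tanh (2 * (s - 2 * π ^ 2 * i)))

def gInnerDeriv (n : ℕ) (s : ℝ) : ℝ :=
  (1 - tanh (2 * s) ^ 2) * 2 + ∑ i ∈ Finset.Icc 1 n, (1 - tanh (2 * (s - 2 * π ^ 2 * i)) ^ 2) * 2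

theorem hasDerivAt_gInner (n : ℕ) (x : ℝ) : HasDerivAt (gInner n) (gInnerDeriv n x) x := by
  have hlin (c : ℝ) : HasDerivAt (fun s => 2 * (s - c)) 2 x := by
    simpa using ((hasDerivAt_id x).sub_const c).const_mul 2
  refine HasDerivAt.add (by simpa using (hlin 0).tanh) (HasDerivAt.fun_sum fun i _ => ?_)
  exact ((hlin _).tanh).const_add 1

theorem gInner_lt_gInnerDeriv (n : ℕ) {x : ℝ} (hx : x ≤ 1 / 4) : gInner n x < gInnerDeriv n x := by
  have hfirst := one_add_tanh_le_two_mul_one_sub_tanh_sq (show 2 * x ≤ 1 / 2 by linarith)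
  have hsum : ∑ i ∈ Finset.Icc 1 n, (1 + tanh (2 * (x - 2 * π ^ 2 * i)))
      ≤ ∑ i ∈ Finset.Icc 1 n, (1 - tanh (2 * (x - 2 * π ^ 2 * i)) ^ 2) * 2 :=
    Finset.sum_le_sum fun i _ => by
      have : 0 ≤ 2 * π ^ 2 * (i : ℝ) := by positivity
      linarith [one_add_tanh_le_two_mul_one_sub_tanh_sq
        (show 2 * (x - 2 * π ^ 2 * i) ≤ 1 / 2 by linarith)]
  unfold gInner gInnerDeriv
  linarith

theorem g_eq_gInner (n : ℕ) {x : ℝ} (hx : 0 < x) (hxa : x ≤ a n) : g n x = gInner n x := by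
  simp [g, gInner, abs_of_pos hx, hxa, Real.sign_of_pos hx]

theorem hasDerivAt_g (n : ℕ) {x : ℝ} (hx : 0 < x) (hxa : x < a n) :
    HasDerivAt (g n) (gInnerDeriv n x) x := by
  refine (hasDerivAt_gInner n x).congr_of_eventuallyEq ?_
  filter_upwards [Ioo_mem_nhds hx hxa] with s hs
  exact g_eq_gInner n hs.1 hs.2.le

theorem quarter_lt_a (n : ℕ) : 1 / 4 < a n := by
  have : 0 ≤ 4 * π ^ 2 * n := by positivity
  unfold a
  nlinarith [pi_gt_three]

theorem ρpos_swap (x y : ℝ) : ρpos (x, y) = ρpos (y, x) := by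
  simp only [ρpos, add_comm]

theorem HasDerivAt.ρpos_mul {F : ℝ → ℝ} {F' x : ℝ} (hF : HasDerivAt F F' x) (y : ℝ) :
    HasDerivAt (fun s => ρpos (s, y) * F s) (ρpos (x, y) * (F' - F x)) x := by
  have hρ : HasDerivAt (fun s => ρpos (s, y)) (-ρpos (x, y)) x := by
    simpa [ρpos] using (((hasDerivAt_id x).add_const y).neg).exp
  exact (hρ.fun_mul hF).congr_deriv (by ring)

theorem deriv_ρpos_mul_fvec_neg (n : ℕ) {c : ℝ} (hc : 0 ≤ c) {x : ℝ} (hx : 0 < x)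
    (hx' : x ≤ 1 / 4) (y : ℝ) : deriv (fun s => ρpos (s, y) * fvec n c s y) x < 0 := by
  have hg := hasDerivAt_g n hx (hx'.trans_lt (quarter_lt_a n))
  have hf : HasDerivAt (fun s => fvec n c s y) (-(25 + c) * gInnerDeriv n x) x := by
    simpa [fvec] using ((hg.const_mul (-(25 + c))).add_const (25 * h n y + c ^ 2))
  rw [(hf.ρpos_mul y).deriv, fvec, g_eq_gInner n hx (hx'.trans (quarter_lt_a n).le)]
  refine mul_neg_of_pos_of_neg (exp_pos _) ?_
  nlinarith [gInner_lt_gInnerDeriv n hx', h_nonneg n y, sq_nonneg c]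

/-- failure of the density propagation inequality near the origin
for the zero-input system: on a small square `(0,ε)×(0,ε)` the divergence
`div(ρf)(x) = ∂(ρf₁)/∂x₁ + ∂(ρf₂)/∂x₂` is strictly negative. -/
theorem divergence_negative_near_origin (n : ℕ) :
    ∃ ε > (0:ℝ), ∀ x₁ ∈ Set.Ioo 0 ε, ∀ x₂ ∈ Set.Ioo 0 ε,
      deriv (fun s => ρpos (s, x₂) * fvec n 0 s x₂) x₁ +
        deriv (fun s => ρpos (x₁, s) * fvec n 0 s x₁) x₂ < 0 := by
  refine ⟨1 / 4, by norm_num, fun x₁ hx₁ x₂ hx₂ => ?_⟩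
  simp only [ρpos_swap x₁]
  exact add_neg (deriv_ρpos_mul_fvec_neg n le_rfl hx₁.1 hx₁.2.le x₂)
    (deriv_ρpos_mul_fvec_neg n le_rfl hx₂.1 hx₂.2.le x₁)

end
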